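/- arXiv:1609.04005 — 2 statements merged into one kernel-verified Lean document; each statement's English description precedes it below -/
import Mathlib

section
/- If there exists a universally null subset of 2^ω of cardinality 2^{ℵ₀}, then there exists a universally null set Y ⊆ 2^ω that is not in bPN′; in particular, Y is not perfectly null in the transitive sense. That is, there is a universally null Y and a balanced perfect set D such that for every G_δ set G ⊇ Y there exists t ∈ 2^ω with μ_D((G + t) ∩ D) > 0. -/
open MeasureTheory Set Pointwise

/-- The Cantor space `2^ω`, a compact topological group under coordinatewise
addition mod 2. -/
abbrev CS := ℕ → ZMod 2

/-- The basic clopen set `[w]` determined by a finite binary sequence `w`: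
all `x ∈ 2^ω` extending `w`. -/
def cyl (w : List (ZMod 2)) : Set CS := {x | ∀ i, i < w.length → x i = w.getD i 0}

/-- `w` is a branching node of `P`: both `[w⌢0] ∩ P` and `[w⌢1] ∩ P` are nonempty. -/
def Branch (P : Set CS) (w : List (ZMod 2)) : Prop :=
  (cyl (w ++ [0]) ∩ P).Nonempty ∧ (cyl (w ++ [1]) ∩ P).Nonempty

/-- A perfect subset of Cantor space: nonempty, closed, with no isolated points. -/
def PerfSet (P : Set CS) : Prop := Perfect P ∧ P.Nonempty

/-- `ν` is a canonical measure of the perfect set `P`: a Borel probability measure with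
`ν P = 1` and `ν [w⌢0] = ν [w⌢1]` for every branching node `w` of `P`. -/
def IsCanonical (P : Set CS) (ν : Measure CS) : Prop :=
  IsProbabilityMeasure ν ∧ ν P = 1 ∧
    ∀ w : List (ZMod 2), Branch P w → ν (cyl (w ++ [0])) = ν (cyl (w ++ [1]))

/-- `A` is `P`-null: the `μ_P`-outer measure of `A ∩ P` is `0`
(quantified over all canonical measures of `P`). -/
def PNull (P A : Set CS) : Prop := ∀ ν : Measure CS, IsCanonical P ν → ν (A ∩ P) = 0

/-- `A` is `P`-measurable: `A ∩ P` differs from a Borel set by a `P`-null set,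
i.e. it is null-measurable with respect to the canonical measure of `P`. -/
def PMeasurable (P A : Set CS) : Prop :=
  ∀ ν : Measure CS, IsCanonical P ν → NullMeasurableSet (A ∩ P) ν

/-- `X` is perfectly null: `P`-null for every perfect set `P`. -/
def PerfectlyNull (X : Set CS) : Prop := ∀ P, PerfSet P → PNull P X

/-- `μ` is the fair-coin (Lebesgue product) measure on `2^ω`:
a Borel probability measure with `μ [w] = 2^{-|w|}` for every finite binary sequence. -/
def IsFairCoin (μ : Measure CS) : Prop :=
  IsProbabilityMeasure μ ∧ ∀ w : List (ZMod 2), μ (cyl w) = (2 : ENNReal)⁻¹ ^ w.length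

/-- The number of branching nodes of `P` that are proper initial segments of `v`. -/
noncomputable def brCount (P : Set CS) (v : List (ZMod 2)) : ℕ :=
  Set.ncard {u : List (ZMod 2) | u <+: v ∧ u ≠ v ∧ Branch P u}

/-- A balanced perfect set: branching nodes of strictly smaller level
are strictly shorter. -/
def BalancedPerf (P : Set CS) : Prop :=
  PerfSet P ∧ ∀ v w : List (ZMod 2), Branch P v → Branch P w →
    brCount P v < brCount P w → v.length < w.length

/-- A uniformly perfect set: on each length, either all nodes meeting `P` branch,
or none does. -/
def UniformlyPerf (P : Set CS) : Prop :=
  PerfSet P ∧ ∀ n : ℕ,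
    (∀ w : List (ZMod 2), w.length = n → (cyl w ∩ P).Nonempty → Branch P w) ∨
    (∀ w : List (ZMod 2), w.length = n → ¬ Branch P w)

/-- A Silver perfect set: determined by a partial function `ℕ ⇀ 2`
whose domain has infinite complement. -/
def SilverPerf (P : Set CS) : Prop :=
  ∃ f : ℕ → Option (ZMod 2), {n | f n = none}.Infinite ∧
    P = {x | ∀ n b, f n = some b → x n = b}

/-- A Marczewski null (`s₀`) set. -/
def S0Set (X : Set CS) : Prop :=
  ∀ P, PerfSet P → ∃ Q, PerfSet Q ∧ Q ⊆ P ∧ Q ∩ X = ∅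

/-- `S` is a Sierpiński set with respect to the measure `μ`: uncountable, with
countable intersection with every `μ`-null set. -/
def Sierpinski (μ : Measure CS) (S : Set CS) : Prop :=
  ¬ S.Countable ∧ ∀ N : Set CS, μ N = 0 → (S ∩ N).Countable

/-- The interleaving homeomorphism `h : 2^ω × 2^ω → 2^ω`,
`h(x,y) = ⟨x 0, y 0, x 1, y 1, …⟩`. -/
def interleave (p : CS × CS) : CS := fun n => if n % 2 = 0 then p.1 (n / 2) else p.2 (n / 2)

/-- `X` is universally null: outer measure zero with respect to every finite diffused
Borel measure on `2^ω`. -/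
def UniversallyNull (X : Set CS) : Prop :=
  ∀ μ : Measure CS, IsFiniteMeasure μ → (∀ x : CS, μ {x} = 0) → μ X = 0

/-- `X` is strongly null: for every sequence of positive `ε n` there are sets `A n` of
diameter `< ε n` (with respect to the standard metric `d(x,y) = 2^{-min{n : x n ≠ y n}}`,
expressed combinatorially) covering `X`. -/
def StronglyNull (X : Set CS) : Prop :=
  ∀ ε : ℕ → ℝ, (∀ n, 0 < ε n) → ∃ A : ℕ → Set CS,
    (∀ n, ∃ N : ℕ, (2 : ℝ)⁻¹ ^ N < ε n ∧ ∀ x ∈ A n, ∀ y ∈ A n, ∀ i < N, x i = y i) ∧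
    X ⊆ ⋃ n, A n

/-- `X` is perfectly null in the transitive sense: for every perfect `P` there is a
`G_δ` set `G ⊇ X` with `(G + t) ∩ P` being `P`-null for every `t`. -/
def PNPrime (X : Set CS) : Prop :=
  ∀ P, PerfSet P → ∃ G : Set CS, IsGδ G ∧ X ⊆ G ∧
    ∀ t : CS, PNull P ((fun g => g + t) '' G)

/-!
Let `D` be the set of sequences vanishing at every odd coordinate: it is balanced perfect, and its
canonical measure `μ_D` is unique, namely the image of Haar measure under spreading a sequence
onto the even coordinates. Call a `G_δ` set `G` bad if `μ_D ((G + t) ∩ D) = 0` for every `t`. Since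
`μ_D D = 1`, a bad `G` misses some `d + t` with `d ∈ D` for every `t`, hence misses a point in every
fibre of the projection `y ↦ (y (2n+1))ₙ` onto the odd coordinates. There are at most `𝔠` bad
sets; index them injectively by the points of a universally null `X` with `|X| = 𝔠` and pick for
each bad `G` a point outside `G` in the fibre over its index. The resulting set `Y` projects
injectively into `X`, so it is universally null (the image of a diffuse measure has only countably
many atoms), and no bad set contains it.
-/

namespace Cantor

lemma zmod_two_eq_zero_or_one (a : ZMod 2) : a = 0 ∨ a = 1 := by
  revert a; decide

/-! ### Cylinders -/

lemma cyl_nil : cyl [] = univ := by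
  ext x; simp [cyl]

lemma cyl_eq_iInter (w : List (ZMod 2)) :
    cyl w = ⋂ i ∈ Finset.range w.length, (fun x : CS => x i) ⁻¹' {w.getD i 0} := by
  ext x; simp [cyl]

lemma measurableSet_cyl (w : List (ZMod 2)) : MeasurableSet (cyl w) := by
  rw [cyl_eq_iInter]
  exact .biInter (Finset.range w.length).countable_toSet
    fun i _ => measurable_pi_apply i (measurableSet_singleton _)

lemma mem_cyl_append {x : CS} {w : List (ZMod 2)} {b : ZMod 2} :
    x ∈ cyl (w ++ [b]) ↔ x ∈ cyl w ∧ x w.length = b := by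
  constructor
  · intro h
    refine ⟨fun i hi => ?_, ?_⟩
    · rw [h i (by simp; omega), List.getD_append _ _ _ _ hi]
    · simpa using h w.length (by simp)
  · rintro ⟨hw, hb⟩ i hi
    simp only [List.length_append, List.length_singleton] at hi
    rcases lt_or_eq_of_le (Nat.lt_succ_iff.1 hi) with hi | rfl
    · rw [List.getD_append _ _ _ _ hi]; exact hw i hi
    · simpa using hb

lemma cyl_eq_union (w : List (ZMod 2)) (b : ZMod 2) :
    cyl w = cyl (w ++ [b]) ∪ cyl (w ++ [b + 1]) := by
  ext x
  simp only [mem_union, mem_cyl_append, ← and_or_left, iff_self_and]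
  intro _
  rcases zmod_two_eq_zero_or_one (x w.length) with h | h <;>
    rcases zmod_two_eq_zero_or_one b with rfl | rfl <;> simp [h, (by decide : (1 : ZMod 2) + 1 = 0)]

lemma disjoint_cyl_append (w : List (ZMod 2)) (b : ZMod 2) :
    Disjoint (cyl (w ++ [b])) (cyl (w ++ [b + 1])) := by
  rw [Set.disjoint_left]
  intro x hb hb'
  have h := (mem_cyl_append.1 hb).2.symm.trans (mem_cyl_append.1 hb').2
  exact (by decide : ∀ c : ZMod 2, c ≠ c + 1) b h

lemma measure_cyl_eq_add (ν : Measure CS) (w : List (ZMod 2)) (b : ZMod 2) :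
    ν (cyl w) = ν (cyl (w ++ [b])) + ν (cyl (w ++ [b + 1])) := by
  rw [cyl_eq_union w b, measure_union (disjoint_cyl_append w b) (measurableSet_cyl _)]

lemma isPiSystem_range_cyl : IsPiSystem (range cyl) := by
  rintro _ ⟨w, rfl⟩ _ ⟨v, rfl⟩ ⟨x, hw, hv⟩
  rcases le_total w.length v.length with h | h
  · refine ⟨v, (inter_eq_right.2 fun y hy i hi => ?_).symm⟩
    rw [hy i (hi.trans_le h), ← hv i (hi.trans_le h), hw i hi]
  · refine ⟨w, (inter_eq_left.2 fun y hy i hi => ?_).symm⟩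
    rw [hy i (hi.trans_le h), ← hw i (hi.trans_le h), hv i hi]

lemma setOf_apply_eq_iUnion_cyl (n : ℕ) (b : ZMod 2) :
    {x : CS | x n = b} = ⋃ w : {w : List (ZMod 2) // w.length = n}, cyl (w.1 ++ [b]) := by
  ext x
  simp only [mem_ofPred_eq, mem_iUnion, Subtype.exists, exists_prop]
  constructor
  · intro h
    refine ⟨List.ofFn fun i : Fin n => x i, by simp, mem_cyl_append.2 ⟨fun i hi => ?_, by simpa⟩⟩
    simp only [List.length_ofFn] at hi
    simp [hi]
  · rintro ⟨w, rfl, hx⟩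
    exact (mem_cyl_append.1 hx).2

lemma generateFrom_range_cyl :
    MeasurableSpace.generateFrom (range cyl) = (inferInstance : MeasurableSpace CS) := by
  refine le_antisymm (MeasurableSpace.generateFrom_le ?_) ?_
  · rintro _ ⟨w, rfl⟩
    exact measurableSet_cyl w
  · refine iSup_le fun n s ⟨s', _, hs⟩ => ?_
    have hpre : (fun x : CS => x n) ⁻¹' s' = ⋃ b ∈ s', {x : CS | x n = b} := by
      ext x; simp
    rw [← hs, hpre]
    refine .biUnion s'.to_countable fun b _ => ?_
    rw [setOf_apply_eq_iUnion_cyl]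
    exact .iUnion fun w => MeasurableSpace.measurableSet_generateFrom ⟨_, rfl⟩

lemma add_single_mem_cyl_append_iff {x : CS} {w : List (ZMod 2)} {b : ZMod 2} :
    x + Pi.single w.length 1 ∈ cyl (w ++ [b + 1]) ↔ x ∈ cyl (w ++ [b]) := by
  have hlt : ∀ i < w.length, (x + Pi.single w.length (1 : ZMod 2) : CS) i = x i :=
    fun i hi => by simp [Pi.single_eq_of_ne hi.ne]
  simp only [mem_cyl_append, Pi.add_apply, Pi.single_eq_same, add_left_inj]
  exact and_congr_left fun _ => forall₂_congr fun i hi => by rw [← hlt i hi]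

/-! ### Uniqueness of the canonical measure -/

variable {P : Set CS} {ν ν' : Measure CS}

lemma _root_.IsCanonical.measure_cyl_eq_zero (hP : MeasurableSet P) (hν : IsCanonical P ν)
    {w : List (ZMod 2)} (hw : cyl w ∩ P = ∅) : ν (cyl w) = 0 := by
  have := hν.1
  refine measure_mono_null (fun x hx hxP => hw.subset ⟨hx, hxP⟩) ?_
  exact (prob_compl_eq_zero_iff hP).2 hν.2.1

lemma _root_.IsCanonical.measure_cyl_append_eq_half (hν : IsCanonical P ν)
    {w : List (ZMod 2)} (hw : Branch P w) (b : ZMod 2) :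
    ν (cyl (w ++ [b])) = ν (cyl w) / 2 := by
  have hsplit : ν (cyl (w ++ [b])) = ν (cyl (w ++ [b + 1])) := by
    rcases zmod_two_eq_zero_or_one b with rfl | rfl
    · exact hν.2.2 w hw
    · exact (hν.2.2 w hw).symm
  rw [ENNReal.eq_div_iff two_ne_zero ENNReal.ofNat_ne_top, two_mul, measure_cyl_eq_add ν w b,
    ← hsplit]

lemma _root_.IsCanonical.measure_cyl_congr (hP : MeasurableSet P) (hν : IsCanonical P ν)
    (hν' : IsCanonical P ν') (w : List (ZMod 2)) : ν (cyl w) = ν' (cyl w) := by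
  induction w using List.reverseRecOn with
  | nil =>
    have := hν.1; have := hν'.1
    rw [cyl_nil, measure_univ, measure_univ]
  | append_singleton w b ih =>
    by_cases hw : Branch P w
    · rw [hν.measure_cyl_append_eq_half hw, hν'.measure_cyl_append_eq_half hw, ih]
    -- one child of `w` misses `P`, so the other child carries all of the mass of `cyl w`
    obtain ⟨c, hc⟩ : ∃ c : ZMod 2, cyl (w ++ [c]) ∩ P = ∅ := by
      simp only [Branch, not_and_or, not_nonempty_iff_eq_empty] at hw
      exact hw.elim (⟨0, ·⟩) (⟨1, ·⟩)
    have hother : ∀ μ, IsCanonical P μ → μ (cyl (w ++ [c + 1])) = μ (cyl w) := fun μ hμ => by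
      rw [measure_cyl_eq_add μ w c, hμ.measure_cyl_eq_zero hP hc, zero_add]
    obtain rfl | rfl := (by decide : ∀ b c : ZMod 2, b = c ∨ b = c + 1) b c
    · rw [hν.measure_cyl_eq_zero hP hc, hν'.measure_cyl_eq_zero hP hc]
    · rw [hother ν hν, hother ν' hν', ih]

lemma _root_.IsCanonical.eq (hP : MeasurableSet P) (hν : IsCanonical P ν)
    (hν' : IsCanonical P ν') : ν = ν' := by
  have := hν.1; have := hν'.1
  refine ext_of_generate_finite _ generateFrom_range_cyl.symm isPiSystem_range_cyl ?_ ?_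
  · rintro _ ⟨w, rfl⟩
    exact hν.measure_cyl_congr hP hν' w
  · rw [measure_univ, measure_univ]

/-! ### The balanced perfect set of sequences vanishing at odd coordinates -/

def oddZero : Set CS := {x | ∀ n, Odd n → x n = 0}

lemma isClosed_oddZero : IsClosed oddZero := by
  simp only [oddZero, ofPred_forall]
  exact isClosed_iInter fun n => isClosed_iInter fun _ =>
    isClosed_eq (continuous_apply n) continuous_const

lemma measurableSet_oddZero : MeasurableSet oddZero := isClosed_oddZero.measurableSet

lemma perfSet_oddZero : PerfSet oddZero := by
  refine ⟨⟨isClosed_oddZero, fun x hx => accPt_iff_nhds.2 fun U hU => ?_⟩, 0, fun _ _ => rfl⟩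
  -- `x` is the limit of its flips at the even coordinates `2k`, which stay in `oddZero`
  set u : ℕ → CS := fun k => x + Pi.single (2 * k) 1
  have hu : Filter.Tendsto u Filter.atTop (nhds x) := by
    refine tendsto_pi_nhds.2 fun n => tendsto_const_nhds.congr' ?_
    filter_upwards [Filter.eventually_gt_atTop n] with k hk
    simp [u, Pi.single_eq_of_ne (show n ≠ 2 * k by omega)]
  obtain ⟨k, hk⟩ := (hu.eventually_mem hU).exists
  refine ⟨u k, ⟨hk, fun n hn => ?_⟩, fun h => ?_⟩
  · have hne : n ≠ 2 * k := by
      rintro rfl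
      exact Nat.not_odd_iff_even.2 (even_two_mul k) hn
    simp [u, Pi.single_eq_of_ne hne, hx n hn]
  · simpa [u] using congrFun h (2 * k)

lemma branch_oddZero_iff (w : List (ZMod 2)) :
    Branch oddZero w ↔ (∀ i < w.length, Odd i → w.getD i 0 = 0) ∧ Even w.length := by
  constructor
  · rintro ⟨⟨x, hx, hxD⟩, ⟨y, hy, hyD⟩⟩
    refine ⟨fun i hi hodd => (mem_cyl_append.1 hx).1 i hi ▸ hxD i hodd, ?_⟩
    by_contra hodd
    have h1 := (mem_cyl_append.1 hy).2
    rw [hyD _ (Nat.not_even_iff_odd.1 hodd)] at h1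
    exact zero_ne_one h1
  · rintro ⟨hw, heven⟩
    have hchild : ∀ b : ZMod 2, (cyl (w ++ [b]) ∩ oddZero).Nonempty := fun b => by
      refine ⟨fun i => if Odd i then 0 else (w ++ [b]).getD i 0, fun i hi => ?_,
        fun n hn => by simp [hn]⟩
      dsimp only
      split_ifs with hodd
      · simp only [List.length_append, List.length_singleton] at hi
        rcases lt_or_eq_of_le (Nat.lt_succ_iff.1 hi) with hi | rfl
        · rw [List.getD_append _ _ _ _ hi, hw i hi hodd]
        · exact absurd heven (Nat.not_even_iff_odd.2 hodd)
      · rfl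
    exact ⟨hchild 0, hchild 1⟩

lemma brCount_oddZero {v : List (ZMod 2)} (hv : Branch oddZero v) :
    brCount oddZero v = v.length / 2 := by
  obtain ⟨hvodd, k, hk⟩ := (branch_oddZero_iff v).1 hv
  -- the branching nodes below `v` are exactly its prefixes of even length
  have hset : {u | u <+: v ∧ u ≠ v ∧ Branch oddZero u} =
      ↑((Finset.range k).image fun j => v.take (2 * j)) := by
    ext u
    simp only [mem_ofPred_eq, Finset.coe_image, Finset.coe_range, mem_image, mem_Iio]
    constructor
    · rintro ⟨hpre, hne, hu⟩
      obtain ⟨j, hj⟩ := ((branch_oddZero_iff u).1 hu).2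
      have hlt : u.length < v.length :=
        hpre.length_le.lt_of_ne fun h => hne (hpre.eq_of_length h)
      refine ⟨j, by omega, ?_⟩
      rw [List.prefix_iff_eq_take.1 hpre, hj, two_mul]
    · rintro ⟨j, hj, rfl⟩
      have hlen : (v.take (2 * j)).length = 2 * j := by rw [List.length_take]; omega
      refine ⟨List.take_prefix _ _, fun h => by have := congrArg List.length h; omega, ?_⟩
      refine (branch_oddZero_iff _).2 ⟨fun i hi hodd => ?_, by rw [hlen]; exact even_two_mul j⟩
      rw [hlen] at hi
      rw [List.getD_eq_getElem _ _ (by omega), List.getElem_take,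
        ← List.getD_eq_getElem _ 0 (by omega)]
      exact hvodd i (by omega) hodd
  rw [brCount, hset, Set.ncard_coe_finset, Finset.card_image_of_injOn, Finset.card_range]
  · omega
  · intro a ha b hb hab
    have := congrArg List.length hab
    simp only [Finset.coe_range, mem_Iio, List.length_take] at ha hb this
    omega

lemma balancedPerf_oddZero : BalancedPerf oddZero := by
  refine ⟨perfSet_oddZero, fun v w hv hw hlt => ?_⟩
  rw [brCount_oddZero hv, brCount_oddZero hw] at hlt
  obtain ⟨a, ha⟩ := ((branch_oddZero_iff v).1 hv).2
  obtain ⟨b, hb⟩ := ((branch_oddZero_iff w).1 hw).2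
  omega

noncomputable def haar : Measure CS := Measure.addHaarMeasure ⊤

instance : IsProbabilityMeasure haar :=
  ⟨by rw [haar, ← TopologicalSpace.PositiveCompacts.coe_top]; exact Measure.addHaarMeasure_self⟩

instance : haar.IsAddLeftInvariant := by
  unfold haar; infer_instance

def spreadEven (z : CS) : CS := fun n => if n % 2 = 0 then z (n / 2) else 0

lemma measurable_spreadEven : Measurable spreadEven := by
  unfold spreadEven; fun_prop

lemma spreadEven_mem_oddZero (z : CS) : spreadEven z ∈ oddZero := fun n hn => by
  simp [spreadEven, Nat.odd_iff.1 hn]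

lemma spreadEven_single_add (k : ℕ) (z : CS) :
    spreadEven (Pi.single k 1 + z) = spreadEven z + Pi.single (2 * k) 1 := by
  funext n
  by_cases h : n % 2 = 0
  · have : n / 2 = k ↔ n = 2 * k := by omega
    simp [spreadEven, h, Pi.single_apply, this, add_comm]
  · have : n ≠ 2 * k := by omega
    simp [spreadEven, h, Pi.single_eq_of_ne this]

noncomputable def oddZeroMeasure : Measure CS := haar.map spreadEven

lemma isCanonical_oddZeroMeasure : IsCanonical oddZero oddZeroMeasure := by
  refine ⟨Measure.isProbabilityMeasure_map measurable_spreadEven.aemeasurable, ?_, fun w hw => ?_⟩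
  · rw [oddZeroMeasure, Measure.map_apply measurable_spreadEven measurableSet_oddZero,
      preimage_eq_univ_iff.2 fun _ ⟨z, hz⟩ => hz ▸ spreadEven_mem_oddZero z, measure_univ]
  obtain ⟨k, hk⟩ := ((branch_oddZero_iff w).1 hw).2
  -- translating by the `k`-th unit vector flips the coordinate `2k = |w|` of `spreadEven z`
  have htrans : spreadEven ⁻¹' cyl (w ++ [1]) =
      (fun z => Pi.single k 1 + z) ⁻¹' (spreadEven ⁻¹' cyl (w ++ [0])) := by
    ext z
    rw [mem_preimage, mem_preimage, mem_preimage, spreadEven_single_add,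
      show 2 * k = w.length by omega, ← add_single_mem_cyl_append_iff,
      show (1 : ZMod 2) + 1 = 0 by decide]
  rw [oddZeroMeasure, Measure.map_apply measurable_spreadEven (measurableSet_cyl _),
    Measure.map_apply measurable_spreadEven (measurableSet_cyl _), htrans,
    measure_preimage_add]

/-! ### Universally null sets -/

lemma _root_.UniversallyNull.mono {X Y : Set CS} (hY : UniversallyNull Y) (h : X ⊆ Y) :
    UniversallyNull X :=
  fun μ hμ hdiff => measure_mono_null h (hY μ hμ hdiff)

lemma _root_.UniversallyNull.of_injOn {f : CS → CS} (hf : Measurable f) {Y : Set CS}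
    (hinj : InjOn f Y) (hY : UniversallyNull (f '' Y)) : UniversallyNull Y := by
  intro μ _ hdiff
  have : NullSingletonClass μ := ⟨hdiff⟩
  set ρ := μ.map f
  -- `f` is injective on `Y`, so only countably many points of `Y` lie over the atoms of `ρ`
  set A := {a | 0 < ρ {a}}
  have hA : A.Countable := Measure.countable_meas_pos_of_disjoint_iUnion
    (fun a => measurableSet_singleton a) fun a b hab => disjoint_singleton.2 hab
  have hatoms : μ (Y ∩ f ⁻¹' A) = 0 :=
    ((mapsTo_preimage f A).mono_left inter_subset_right |>.countable_of_injOn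
      (hinj.mono inter_subset_left) hA).measure_zero μ
  have hdiffuse : ∀ a, ρ.restrict Aᶜ {a} = 0 := fun a => by
    rw [Measure.restrict_apply (measurableSet_singleton a)]
    by_cases ha : a ∈ A
    · simp [ha]
    · exact measure_mono_null inter_subset_left (nonpos_iff_eq_zero.1 (not_lt.1 ha))
  have hrest : μ (f ⁻¹' (f '' Y ∩ Aᶜ)) = 0 := by
    refine nonpos_iff_eq_zero.1 ((Measure.le_map_apply hf.aemeasurable _).trans_eq ?_)
    rw [← Measure.restrict_apply' hA.measurableSet.compl]
    exact hY _ inferInstance hdiffuse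
  refine measure_mono_null (fun y hy => ?_) (measure_union_null hatoms hrest)
  by_cases hyA : f y ∈ A
  exacts [Or.inl ⟨hy, hyA⟩, Or.inr ⟨mem_image_of_mem f hy, hyA⟩]

lemma exists_universallyNull_forall_not_subset {X : Set CS} (hX : UniversallyNull X)
    {𝒢 : Set (Set CS)} (h𝒢 : Cardinal.mk 𝒢 ≤ Cardinal.mk X) {f : CS → CS} (hf : Measurable f)
    (hfib : ∀ G ∈ 𝒢, ∀ s ∈ X, ∃ y ∉ G, f y = s) :
    ∃ Y, UniversallyNull Y ∧ ∀ G ∈ 𝒢, ¬ Y ⊆ G := by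
  obtain ⟨ι⟩ := (Cardinal.le_def _ _).1 h𝒢
  choose y hyG hfy using fun G : 𝒢 => hfib G G.2 (ι G) (ι G).2
  refine ⟨range y, ?_, fun G hG hsub => hyG ⟨G, hG⟩ (hsub (mem_range_self _))⟩
  have hinj : InjOn f (range y) := by
    rintro _ ⟨G, rfl⟩ _ ⟨G', rfl⟩ h
    rw [hfy, hfy] at h
    rw [ι.injective (Subtype.ext h)]
  refine UniversallyNull.of_injOn hf hinj (hX.mono ?_)
  rintro _ ⟨_, ⟨G, rfl⟩, rfl⟩
  rw [hfy]
  exact (ι G).2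

lemma cardinal_setOf_isGδ_le_continuum :
    Cardinal.mk {G : Set CS | IsGδ G} ≤ Cardinal.continuum := by
  have hgen := MeasurableSpace.cardinal_measurableSet_le_continuum
    ((MeasurableSpace.countable_countableGeneratingSet (α := CS)).le_aleph0.trans
      Cardinal.aleph0_le_continuum)
  rw [MeasurableSpace.generateFrom_countableGeneratingSet] at hgen
  exact (Cardinal.mk_le_mk_of_subset fun G hG => hG.measurableSet).trans hgen

def oddPart (y : CS) : CS := fun n => y (2 * n + 1)

def spreadOdd (s : CS) : CS := fun n => if n % 2 = 1 then s (n / 2) else 0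

lemma measurable_oddPart : Measurable oddPart :=
  measurable_pi_lambda _ fun _ => measurable_pi_apply _

lemma oddPart_add_spreadOdd {d : CS} (hd : d ∈ oddZero) (s : CS) :
    oddPart (d + spreadOdd s) = s := by
  funext n
  have h1 : (2 * n + 1) % 2 = 1 := by omega
  have h2 : (2 * n + 1) / 2 = n := by omega
  simp [oddPart, spreadOdd, h1, h2, hd (2 * n + 1) (odd_two_mul_add_one n)]

lemma exists_not_mem_oddPart_eq {G : Set CS}
    (hG : ∀ t, oddZeroMeasure ((fun g => g + t) '' G ∩ oddZero) = 0) (s : CS) :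
    ∃ y ∉ G, oddPart y = s := by
  obtain ⟨d, hd, hdG⟩ := not_subset.1 fun hsub : oddZero ⊆ (fun g => g + spreadOdd s) '' G => by
    have h := hG (spreadOdd s)
    rw [inter_eq_right.2 hsub, isCanonical_oddZeroMeasure.2.1] at h
    exact one_ne_zero h
  refine ⟨d + spreadOdd s, fun hG' => hdG ?_, oddPart_add_spreadOdd hd s⟩
  rwa [image_add_right, CharTwo.neg_eq]

end Cantor

open Cantor in
/-- If there is a universally null set of cardinality `2^{ℵ₀}`, then there
are a universally null `Y` and a balanced perfect `D` such that for every `G_δ` set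
`G ⊇ Y` there exists `t` with `μ_D((G + t) ∩ D) > 0`; in particular `Y ∉ bPN′ ⊇ PN′`. -/
theorem stmt_16 (h : ∃ X : Set CS, UniversallyNull X ∧ Cardinal.mk ↥X = Cardinal.continuum) :
    ∃ Y D : Set CS, UniversallyNull Y ∧ BalancedPerf D ∧
      ∀ G : Set CS, IsGδ G → Y ⊆ G → ∃ t : CS, ∀ ν : Measure CS, IsCanonical D ν →
        0 < ν (((fun g => g + t) '' G) ∩ D) := by
  obtain ⟨X, hX, hXcard⟩ := h
  set bad := {G : Set CS | IsGδ G ∧ ∀ t, oddZeroMeasure ((fun g => g + t) '' G ∩ oddZero) = 0}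
  have hbad : Cardinal.mk bad ≤ Cardinal.mk X :=
    hXcard ▸ (Cardinal.mk_le_mk_of_subset fun _ hG => hG.1).trans
      cardinal_setOf_isGδ_le_continuum
  obtain ⟨Y, hY, hYbad⟩ := exists_universallyNull_forall_not_subset hX hbad measurable_oddPart
    fun G hG s _ => exists_not_mem_oddPart_eq hG.2 s
  refine ⟨Y, oddZero, hY, balancedPerf_oddZero, fun G hG hYG => ?_⟩
  obtain ⟨t, ht⟩ : ∃ t, oddZeroMeasure ((fun g => g + t) '' G ∩ oddZero) ≠ 0 := by
    by_contra! hnull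
    exact hYbad G ⟨hG, hnull⟩ hYG
  refine ⟨t, fun ν hν => ?_⟩
  rw [hν.eq measurableSet_oddZero isCanonical_oddZeroMeasure]
  exact pos_iff_ne_zero.2 ht
end

section
/- If X ⊆ 2^ω is perfectly null in the transitive sense and Y ⊆ 2^ω is an SR^N set, then X + Y is perfectly null. -/
/-!
Fix a perfect set `P` and let `h : 2^ω → P` be its canonical map, built from the branching
nodes of `P` along each `s ∈ 2^ω`. It is a continuous injection into `P` that carries the
fair-coin measure `m` to a canonical measure of `P`, and canonical measures are unique, since
they are determined on cylinders. Hence a set `A` is `P`-null iff `m (h⁻¹ A) = 0`.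

Let `G ⊇ X` be the `G_δ` set witnessing `X ∈ PN′` for `P`. The Borel set
`H = {(y, s) | h s + y ∈ G}` has sections `H_y = h⁻¹ (G + y)`, which are `m`-null. As `Y` is
`SR^N`, `⋃_{y ∈ Y} H_y` is `m`-null, and it contains `h⁻¹ (X + Y)` because `x + y + y = x`.
-/

open MeasureTheory Set Pointwise

/-- `Y` is an `SR^N` set with respect to the measure `m`: for every Borel
`H ⊆ 2^ω × 2^ω` with all vertical sections `m`-null, `⋃_{x ∈ Y} H_x` is `m`-null. -/
def SRN (m : Measure CS) (Y : Set CS) : Prop :=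
  ∀ H : Set (CS × CS), MeasurableSet H → (∀ x : CS, m {y | (x, y) ∈ H} = 0) →
    m (⋃ x ∈ Y, {y | (x, y) ∈ H}) = 0

lemma zmod_two_eq_zero_or_one (a : ZMod 2) : a = 0 ∨ a = 1 := by
  revert a; decide

section Cylinders

variable {v w : List (ZMod 2)} {x : CS}

-- `cyl w` is definitionally `PiNat.cylinder (fun i => w.getD i 0) w.length`.
lemma measurableSet_cyl (w : List (ZMod 2)) : MeasurableSet (cyl w) :=
  (PiNat.isOpen_cylinder _ _ _).measurableSet

lemma cyl_nil : cyl [] = univ :=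
  eq_univ_of_forall fun _ _ hi => absurd hi (Nat.not_lt_zero _)

lemma cyl_anti (h : v <+: w) : cyl w ⊆ cyl v := fun x hx i hi => by
  have hiw := hi.trans_le h.length_le
  rw [hx i hiw, List.getD_eq_getElem _ _ hi, List.getD_eq_getElem _ _ hiw, h.getElem hi]

lemma cyl_subset_cylinder (hx : x ∈ cyl w) {n : ℕ} (hn : n ≤ w.length) :
    cyl w ⊆ PiNat.cylinder x n :=
  fun _ hy i hi => (hy i (hi.trans_le hn)).trans (hx i (hi.trans_le hn)).symm

lemma mem_cyl_append {b : ZMod 2} : x ∈ cyl (w ++ [b]) ↔ x ∈ cyl w ∧ x w.length = b := by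
  have hlast : (w ++ [b]).getD w.length 0 = b := by simp
  refine ⟨fun h => ⟨cyl_anti (List.prefix_append _ _) h, hlast ▸ h _ (by simp)⟩, ?_⟩
  rintro ⟨hw, hb⟩ i hi
  rcases (Nat.lt_succ_iff_lt_or_eq.1 (by simpa using hi)) with hi | rfl
  · rw [List.getD_append _ _ _ _ hi]; exact hw i hi
  · rw [hlast, hb]

def initSeg (x : CS) (n : ℕ) : List (ZMod 2) := (List.range n).map x

@[simp] lemma length_initSeg (x : CS) (n : ℕ) : (initSeg x n).length = n := by
  simp [initSeg]

lemma mem_cyl_iff_initSeg_eq : x ∈ cyl w ↔ initSeg x w.length = w := by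
  refine ⟨fun h => List.ext_getElem (by simp) fun i _ hi => ?_, fun h i hi => ?_⟩
  · simp [initSeg, h i hi, List.getD_eq_getElem?_getD, hi]
  · rw [← h]; simp [initSeg, hi]

lemma cyl_initSeg (x : CS) (n : ℕ) : cyl (initSeg x n) = PiNat.cylinder x n := by
  ext y
  simp only [cyl, mem_ofPred_eq, length_initSeg, PiNat.mem_cylinder_iff]
  exact forall₂_congr fun i hi => by simp [initSeg, hi]

lemma initSeg_prefix (x : CS) {m n : ℕ} (h : m ≤ n) : initSeg x m <+: initSeg x n := by
  rw [initSeg, initSeg, ← min_eq_left h, ← List.take_range, List.map_take]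
  exact List.take_prefix _ _

lemma prefix_of_mem_cyl (hv : x ∈ cyl v) (hw : x ∈ cyl w) (h : v.length ≤ w.length) :
    v <+: w := by
  rw [mem_cyl_iff_initSeg_eq] at hv hw
  rw [← hv, ← hw]
  exact initSeg_prefix x h

lemma cyl_append_eq_setOf (w : List (ZMod 2)) (b : ZMod 2) :
    cyl (w ++ [b]) = {x | initSeg x w.length = w ∧ x w.length = b} := by
  ext x
  rw [mem_cyl_append, mem_cyl_iff_initSeg_eq]
  rfl

lemma cyl_eq_union_append (w : List (ZMod 2)) (b : ZMod 2) :
    cyl w = cyl (w ++ [b]) ∪ cyl (w ++ [b + 1]) := by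
  ext x
  simp only [mem_union, mem_cyl_append, ← and_or_left, iff_self_and]
  intro _
  generalize x w.length = a
  revert a b; decide

lemma disjoint_cyl_append (w : List (ZMod 2)) (b : ZMod 2) :
    Disjoint (cyl (w ++ [b])) (cyl (w ++ [b + 1])) := by
  refine disjoint_left.2 fun x hb hb' => ?_
  have key : ∀ b a : ZMod 2, a = b → a = b + 1 → False := by decide
  exact key b _ (mem_cyl_append.1 hb).2 (mem_cyl_append.1 hb').2

lemma measure_cyl_eq_add (ν : Measure CS) (w : List (ZMod 2)) (b : ZMod 2) :
    ν (cyl w) = ν (cyl (w ++ [b])) + ν (cyl (w ++ [b + 1])) := by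
  conv_lhs => rw [cyl_eq_union_append w b]
  exact measure_union (disjoint_cyl_append w b) (measurableSet_cyl _)

lemma measure_cyl_append_of_eq {ν : Measure CS} (h : ν (cyl (w ++ [0])) = ν (cyl (w ++ [1])))
    (b : ZMod 2) : ν (cyl (w ++ [b])) = ν (cyl w) * 2⁻¹ := by
  have h0 : ν (cyl (w ++ [0])) = ν (cyl w) * 2⁻¹ := by
    rw [← div_eq_mul_inv, ENNReal.eq_div_iff two_ne_zero ENNReal.ofNat_ne_top, two_mul,
      measure_cyl_eq_add ν w 0, zero_add, h]
  rcases zmod_two_eq_zero_or_one b with rfl | rfl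
  · exact h0
  · rw [← h, h0]

end Cylinders

lemma isLocallyConstant_of_dependsOn_Iio {E : ℕ → Type*} [∀ n, TopologicalSpace (E n)]
    [∀ n, DiscreteTopology (E n)] {β : Type*} {f : (∀ n, E n) → β} {n : ℕ}
    (hf : DependsOn f (Iio n)) : IsLocallyConstant f :=
  (IsLocallyConstant.iff_exists_open f).2 fun x =>
    ⟨PiNat.cylinder x n, PiNat.isOpen_cylinder _ _ _, PiNat.self_mem_cylinder _ _,
      fun _ hy => hf fun i hi => hy i hi⟩

lemma dependsOn_initSeg (n : ℕ) : DependsOn (initSeg · n) (Iio n) := fun x y h => by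
  simp only [initSeg]
  exact List.map_congr_left fun i hi => h i (by simpa using hi)

noncomputable def fairCoin : Measure CS := Measure.addHaarMeasure ⊤

instance : IsProbabilityMeasure fairCoin :=
  ⟨by simpa [fairCoin] using Measure.addHaarMeasure_self (G := CS) (K₀ := ⊤)⟩

instance : fairCoin.IsAddLeftInvariant := by
  unfold fairCoin; infer_instance

/-- Flipping the `n`-th coordinate preserves `fairCoin` and fixes everything that
depends only on the coordinates below `n`. -/
lemma fairCoin_setOf_eq_zero_eq_one {β : Type*} {f : CS → β} {n : ℕ}
    (hf : DependsOn f (Iio n)) (a : β) :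
    fairCoin {s | f s = a ∧ s n = 0} = fairCoin {s | f s = a ∧ s n = 1} := by
  rw [← measure_preimage_add_right fairCoin (Pi.single n 1)]
  congr 1
  ext s
  have hfs : f (s + Pi.single n 1) = f s := hf fun i hi => by
    simp [(mem_Iio.1 hi).ne]
  have key : ∀ c : ZMod 2, c + 1 = 0 ↔ c = 1 := by decide
  simp [hfs, key]

theorem isFairCoin_fairCoin : IsFairCoin fairCoin := by
  refine ⟨inferInstance, fun w => ?_⟩
  induction w using List.reverseRecOn with
  | nil => simp [cyl_nil]
  | append_singleton w b ih =>
    have h01 : fairCoin (cyl (w ++ [0])) = fairCoin (cyl (w ++ [1])) := by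
      simpa only [cyl_append_eq_setOf] using
        fairCoin_setOf_eq_zero_eq_one (dependsOn_initSeg _) w
    rw [measure_cyl_append_of_eq h01, ih]
    simp [pow_succ]

section Canonical

variable {P : Set CS} {w : List (ZMod 2)}

lemma branch_iff (b : ZMod 2) :
    Branch P w ↔ (cyl (w ++ [b]) ∩ P).Nonempty ∧ (cyl (w ++ [b + 1]) ∩ P).Nonempty := by
  rcases zmod_two_eq_zero_or_one b with rfl | rfl
  · rw [zero_add]; rfl
  · rw [show (1 + 1 : ZMod 2) = 0 from rfl, and_comm]; rfl

lemma Branch.nonempty_inter (h : Branch P w) (b : ZMod 2) : (cyl (w ++ [b]) ∩ P).Nonempty :=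
  ((branch_iff b).1 h).1

lemma inter_cyl_append_eq_of_not_branch (h : ¬ Branch P w) {b : ZMod 2}
    (hb : (cyl (w ++ [b]) ∩ P).Nonempty) : cyl (w ++ [b]) ∩ P = cyl w ∩ P := by
  have hb' : cyl (w ++ [b + 1]) ∩ P = ∅ :=
    not_nonempty_iff_eq_empty.1 fun hb' => h ((branch_iff b).2 ⟨hb, hb'⟩)
  rw [cyl_eq_union_append w b, union_inter_distrib_right, hb', union_empty]

variable {ν ν₁ ν₂ : Measure CS}

lemma IsCanonical.measure_inter (hP : IsClosed P) (hν : IsCanonical P ν) (A : Set CS) :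
    ν (A ∩ P) = ν A := by
  have := hν.1
  refine measure_inter_conull ?_
  rw [measure_compl hP.measurableSet (measure_ne_top ν P), hν.2.1, measure_univ, tsub_self]

open Classical in
lemma IsCanonical.measure_cyl_append (hP : IsClosed P) (hν : IsCanonical P ν)
    (w : List (ZMod 2)) (b : ZMod 2) :
    ν (cyl (w ++ [b])) = if Branch P w then ν (cyl w) * 2⁻¹
      else if (cyl (w ++ [b]) ∩ P).Nonempty then ν (cyl w) else 0 := by
  split_ifs with hw hb
  · exact measure_cyl_append_of_eq (hν.2.2 w hw) b
  · rw [← hν.measure_inter hP, inter_cyl_append_eq_of_not_branch hw hb, hν.measure_inter hP]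
  · rw [← hν.measure_inter hP, not_nonempty_iff_eq_empty.1 hb, measure_empty]

lemma IsCanonical.measure_cyl_eq (hP : IsClosed P) (h₁ : IsCanonical P ν₁)
    (h₂ : IsCanonical P ν₂) (w : List (ZMod 2)) : ν₁ (cyl w) = ν₂ (cyl w) := by
  have := h₁.1; have := h₂.1
  induction w using List.reverseRecOn with
  | nil => rw [cyl_nil, measure_univ, measure_univ]
  | append_singleton w b ih =>
    rw [h₁.measure_cyl_append hP, h₂.measure_cyl_append hP, ih]

lemma PiNat.isPiSystem_cylinders {E : ℕ → Type*} :
    IsPiSystem {s : Set (∀ n, E n) | ∃ x n, s = PiNat.cylinder x n} := by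
  rintro _ ⟨x, m, rfl⟩ _ ⟨y, n, rfl⟩ ⟨z, hzx, hzy⟩
  rw [← PiNat.mem_cylinder_iff_eq.1 hzx, ← PiNat.mem_cylinder_iff_eq.1 hzy]
  rcases le_total m n with h | h
  · exact ⟨z, n, inter_eq_right.2 (PiNat.cylinder_anti z h)⟩
  · exact ⟨z, m, inter_eq_left.2 (PiNat.cylinder_anti z h)⟩

lemma measurableSpace_eq_generateFrom_cylinders :
    (inferInstance : MeasurableSpace CS) =
      .generateFrom {s | ∃ x n, s = PiNat.cylinder x n} := by
  rw [BorelSpace.measurable_eq (α := CS)]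
  exact (PiNat.isTopologicalBasis_cylinders _).borel_eq_generateFrom

theorem IsCanonical.unique (hP : IsClosed P) (h₁ : IsCanonical P ν₁)
    (h₂ : IsCanonical P ν₂) : ν₁ = ν₂ := by
  have := h₁.1
  refine ext_of_generate_finite _ measurableSpace_eq_generateFrom_cylinders
    PiNat.isPiSystem_cylinders ?_ ?_
  · rintro _ ⟨x, n, rfl⟩
    rw [← cyl_initSeg]
    exact h₁.measure_cyl_eq hP h₂ _
  · rw [← cyl_nil]
    exact h₁.measure_cyl_eq hP h₂ _

end Canonical

section CanonicalMap

variable {P : Set CS} {w u : List (ZMod 2)}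

lemma exists_branch_extension (hP : Perfect P) (hw : (cyl w ∩ P).Nonempty) :
    ∃ u, w <+: u ∧ Branch P u := by
  obtain ⟨x, hxw, hxP⟩ := hw
  obtain ⟨y, ⟨hyx, hyP⟩, hne⟩ := accPt_iff_nhds.1 (hP.acc x hxP) _
    ((PiNat.isOpen_cylinder _ x w.length).mem_nhds (PiNat.self_mem_cylinder x _))
  set k := PiNat.firstDiff y x
  have hwk : w.length ≤ k := (PiNat.mem_cylinder_iff_le_firstDiff hne _).1 hyx
  have hxu : x ∈ cyl (initSeg x k) := mem_cyl_iff_initSeg_eq.2 (by simp)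
  have hyu : y ∈ cyl (initSeg x k) := by
    rw [cyl_initSeg]; exact PiNat.mem_cylinder_firstDiff y x
  have hyk : y k = x k + 1 := by
    have key : ∀ a b : ZMod 2, a ≠ b → a = b + 1 := by decide
    exact key _ _ (PiNat.apply_firstDiff_ne hne)
  refine ⟨initSeg x k, prefix_of_mem_cyl hxw hxu (by simpa),
    (branch_iff (P := P) (x k)).2 ⟨?_, ?_⟩⟩
  · exact ⟨x, mem_cyl_append.2 ⟨hxu, by simp⟩, hxP⟩
  · exact ⟨y, mem_cyl_append.2 ⟨hyu, by simp [hyk]⟩, hyP⟩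

open Classical in
noncomputable def nextBranch (P : Set CS) (w : List (ZMod 2)) : List (ZMod 2) :=
  if h : {u | w <+: u ∧ Branch P u}.Nonempty then Function.argminOn List.length _ h else w

lemma nextBranch_spec (hP : Perfect P) (hw : (cyl w ∩ P).Nonempty) :
    (w <+: nextBranch P w ∧ Branch P (nextBranch P w)) ∧
      ∀ u, w <+: u → Branch P u → (nextBranch P w).length ≤ u.length := by
  obtain ⟨u, hu⟩ := exists_branch_extension hP hw
  have h : {u | w <+: u ∧ Branch P u}.Nonempty := ⟨u, hu⟩
  rw [nextBranch, dif_pos h]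
  exact ⟨Function.argminOn_mem _ _ h,
    fun v hwv hv => not_lt.1 (Function.not_lt_argminOn List.length _
      (show v ∈ {u | w <+: u ∧ Branch P u} from ⟨hwv, hv⟩))⟩

/-- The branching node of `P` that the canonical homeomorphism `h_P` assigns to the
word `s 0, …, s (n - 1)`. -/
noncomputable def branchNode (P : Set CS) (s : CS) : ℕ → List (ZMod 2)
  | 0 => nextBranch P []
  | n + 1 => nextBranch P (branchNode P s n ++ [s n])

lemma dependsOn_branchNode (P : Set CS) : ∀ n, DependsOn (branchNode P · n) (Iio n)
  | 0 => fun _ _ _ => rfl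
  | n + 1 => fun s t h => by
    have hn : branchNode P s n = branchNode P t n :=
      dependsOn_branchNode P n fun i hi => h i (hi.trans n.lt_succ_self)
    simp only [branchNode]
    rw [hn, h n n.lt_succ_self]

lemma branch_branchNode (hP : PerfSet P) (s : CS) : ∀ n, Branch P (branchNode P s n)
  | 0 => (nextBranch_spec hP.1 (by rw [cyl_nil, univ_inter]; exact hP.2)).1.2
  | n + 1 => (nextBranch_spec hP.1 ((branch_branchNode hP s n).nonempty_inter (s n))).1.2

lemma branchNode_succ_spec (hP : PerfSet P) (s : CS) (n : ℕ) :
    (branchNode P s n ++ [s n] <+: branchNode P s (n + 1) ∧ Branch P (branchNode P s (n + 1))) ∧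
      ∀ u, branchNode P s n ++ [s n] <+: u → Branch P u →
        (branchNode P s (n + 1)).length ≤ u.length :=
  nextBranch_spec hP.1 ((branch_branchNode hP s n).nonempty_inter (s n))

lemma length_branchNode_zero_le (hP : PerfSet P) (s : CS) (hu : Branch P u) :
    (branchNode P s 0).length ≤ u.length :=
  (nextBranch_spec hP.1 (by rw [cyl_nil, univ_inter]; exact hP.2)).2 u List.nil_prefix hu

lemma strictMono_length_branchNode (hP : PerfSet P) (s : CS) :
    StrictMono fun n => (branchNode P s n).length :=
  strictMono_nat_of_lt_succ fun n => by
    simpa using ((branchNode_succ_spec hP s n).1.1).length_le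

lemma le_length_branchNode (hP : PerfSet P) (s : CS) (n : ℕ) : n ≤ (branchNode P s n).length :=
  (strictMono_length_branchNode hP s).id_le n

lemma append_prefix_branchNode (hP : PerfSet P) (s : CS) {m n : ℕ} (h : m < n) :
    branchNode P s m ++ [s m] <+: branchNode P s n := by
  induction n, h using Nat.le_induction with
  | base => exact (branchNode_succ_spec hP s m).1.1
  | succ n _ ih => exact ih.trans ((List.prefix_append _ _).trans (branchNode_succ_spec hP s n).1.1)

lemma branchNode_prefix (hP : PerfSet P) (s : CS) {m n : ℕ} (h : m ≤ n) :
    branchNode P s m <+: branchNode P s n := by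
  rcases h.eq_or_lt with rfl | h
  · exact List.prefix_refl _
  · exact (List.prefix_append _ _).trans (append_prefix_branchNode hP s h)

/-- The canonical map `h_P : 2^ω → P`; its `i`-th value is already fixed by the node
`branchNode P s (i + 1)`, whose length exceeds `i`. -/
noncomputable def canonicalMap (P : Set CS) (s : CS) : CS :=
  fun i => (branchNode P s (i + 1)).getD i 0

lemma canonicalMap_mem_cyl (hP : PerfSet P) (s : CS) (n : ℕ) :
    canonicalMap P s ∈ cyl (branchNode P s n ++ [s n]) := by
  intro i hi
  have getD_eq {u v : List (ZMod 2)} (h : u <+: v) (hi : i < u.length) :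
      v.getD i 0 = u.getD i 0 := by
    rw [List.getD_eq_getElem _ _ hi, List.getD_eq_getElem _ _ (hi.trans_le h.length_le),
      h.getElem hi]
  have hlen : i < (branchNode P s (i + 1)).length := le_length_branchNode hP s (i + 1)
  show (branchNode P s (i + 1)).getD i 0 = _
  rw [← getD_eq (branchNode_prefix hP s (Nat.succ_le_succ (le_max_right n i))) hlen,
    getD_eq (append_prefix_branchNode hP s (Nat.lt_succ_of_le (le_max_left n i))) hi]

lemma canonicalMap_apply_length (hP : PerfSet P) (s : CS) (n : ℕ) :
    canonicalMap P s (branchNode P s n).length = s n :=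
  (mem_cyl_append.1 (canonicalMap_mem_cyl hP s n)).2

lemma continuous_canonicalMap (P : Set CS) : Continuous (canonicalMap P) :=
  continuous_pi fun i => (isLocallyConstant_of_dependsOn_Iio (n := i + 1) fun s t h => by
    have hst : branchNode P s (i + 1) = branchNode P t (i + 1) := dependsOn_branchNode P (i + 1) h
    simp only [canonicalMap, hst]).continuous

lemma injective_canonicalMap (hP : PerfSet P) : Function.Injective (canonicalMap P) := by
  intro s t hst
  by_contra hne
  set k := PiNat.firstDiff s t
  have hnode : branchNode P s k = branchNode P t k :=
    dependsOn_branchNode P k fun i hi => PiNat.apply_eq_of_lt_firstDiff hi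
  apply PiNat.apply_firstDiff_ne hne
  rw [← canonicalMap_apply_length hP s k, ← canonicalMap_apply_length hP t k, hst, hnode]

lemma canonicalMap_mem (hP : PerfSet P) (s : CS) : canonicalMap P s ∈ P := by
  refine hP.1.closed.closure_subset ((PiNat.isTopologicalBasis_cylinders _).mem_closure_iff.2 ?_)
  rintro _ ⟨x, n, rfl⟩ hx
  rw [← PiNat.mem_cylinder_iff_eq.1 hx]
  refine ((branch_branchNode hP s n).nonempty_inter (s n)).mono (inter_subset_inter_left _ ?_)
  refine cyl_subset_cylinder (canonicalMap_mem_cyl hP s n) ?_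
  simpa using (le_length_branchNode hP s n).trans (Nat.le_succ _)

lemma preimage_canonicalMap_self (hP : PerfSet P) : canonicalMap P ⁻¹' P = univ :=
  eq_univ_of_forall (canonicalMap_mem hP)

lemma measurableEmbedding_canonicalMap (hP : PerfSet P) : MeasurableEmbedding (canonicalMap P) :=
  ((continuous_canonicalMap P).isClosedEmbedding (injective_canonicalMap hP)).measurableEmbedding

lemma exists_branchNode_eq (hP : PerfSet P) {s : CS} (hu : Branch P u)
    (h : canonicalMap P s ∈ cyl u) : ∃ n, branchNode P s n = u := by
  have hex : ∃ k, u.length < (branchNode P s (k + 1)).length :=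
    ⟨u.length, le_length_branchNode hP s _⟩
  set n := Nat.find hex
  have hmem : canonicalMap P s ∈ cyl (branchNode P s n) :=
    cyl_anti (List.prefix_append _ _) (canonicalMap_mem_cyl hP s n)
  have hle : (branchNode P s n).length ≤ u.length := by
    rcases hn : n with _ | m
    · exact length_branchNode_zero_le hP s hu
    · exact not_lt.1 (Nat.find_min hex (by omega : m < n))
  refine ⟨n, (prefix_of_mem_cyl hmem h hle).eq_of_length
    (hle.eq_or_lt.resolve_right fun hlt => ?_)⟩
  have hpre : branchNode P s n ++ [s n] <+: u :=
    prefix_of_mem_cyl (canonicalMap_mem_cyl hP s n) h (by simpa using hlt)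
  exact (Nat.find_spec hex).not_ge ((branchNode_succ_spec hP s n).2 u hpre hu)

lemma preimage_canonicalMap_cyl_append (hP : PerfSet P) (hu : Branch P u) (b : ZMod 2) :
    canonicalMap P ⁻¹' cyl (u ++ [b]) = ⋃ n, {s | branchNode P s n = u ∧ s n = b} := by
  ext s
  simp only [mem_preimage, mem_iUnion, mem_ofPred_eq]
  constructor
  · intro h
    obtain ⟨n, rfl⟩ := exists_branchNode_eq hP hu (cyl_anti (List.prefix_append _ _) h)
    exact ⟨n, rfl, (canonicalMap_apply_length hP s n).symm.trans (mem_cyl_append.1 h).2⟩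
  · rintro ⟨n, rfl, rfl⟩
    exact canonicalMap_mem_cyl hP s n

theorem isCanonical_map_canonicalMap (hP : PerfSet P) :
    IsCanonical P (fairCoin.map (canonicalMap P)) := by
  have he := measurableEmbedding_canonicalMap hP
  refine ⟨Measure.isProbabilityMeasure_map he.measurable.aemeasurable, ?_, fun u hu => ?_⟩
  · rw [he.map_apply, preimage_canonicalMap_self hP, measure_univ]
  have hdisj (b : ZMod 2) :
      Pairwise (Function.onFun Disjoint fun n => {s | branchNode P s n = u ∧ s n = b}) :=
    fun m n hmn => disjoint_left.2 fun s hm hn => hmn <|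
      (strictMono_length_branchNode hP s).injective (congrArg List.length (hm.1.trans hn.1.symm))
  have hmeas (b : ZMod 2) (n : ℕ) : MeasurableSet {s | branchNode P s n = u ∧ s n = b} :=
    (((isLocallyConstant_of_dependsOn_Iio (dependsOn_branchNode P n)).isOpen_fiber u)
      ).measurableSet.inter (measurableSet_eq_fun (measurable_pi_apply n) measurable_const)
  rw [he.map_apply, he.map_apply, preimage_canonicalMap_cyl_append hP hu,
    preimage_canonicalMap_cyl_append hP hu, measure_iUnion (hdisj 0) (hmeas 0),
    measure_iUnion (hdisj 1) (hmeas 1)]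
  exact tsum_congr fun n => fairCoin_setOf_eq_zero_eq_one (dependsOn_branchNode P n) u

end CanonicalMap

theorem pNull_iff_fairCoin_preimage_canonicalMap {P : Set CS} (hP : PerfSet P) {A : Set CS} :
    PNull P A ↔ fairCoin (canonicalMap P ⁻¹' A) = 0 := by
  have hmap : fairCoin.map (canonicalMap P) (A ∩ P) = fairCoin (canonicalMap P ⁻¹' A) := by
    rw [(measurableEmbedding_canonicalMap hP).map_apply, preimage_inter,
      preimage_canonicalMap_self hP, inter_univ]
  refine ⟨fun h => hmap ▸ h _ (isCanonical_map_canonicalMap hP), fun h ν hν => ?_⟩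
  rw [hν.unique hP.1.closed (isCanonical_map_canonicalMap hP), hmap, h]

/-- If `X` is perfectly null in the transitive sense and `Y` is an `SR^N`
set, then `X + Y` is perfectly null. -/
theorem stmt_19 (X Y : Set CS) (hX : PNPrime X)
    (hY : ∀ m : Measure CS, IsFairCoin m → SRN m Y) :
    PerfectlyNull (X + Y) := by
  intro P hP
  obtain ⟨G, hG, hXG, hGnull⟩ := hX P hP
  let H : Set (CS × CS) := {p | canonicalMap P p.2 + p.1 ∈ G}
  have hH : MeasurableSet H :=
    (((continuous_canonicalMap P).comp continuous_snd).add continuous_fst).measurable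
      hG.measurableSet
  have hsection (y : CS) : fairCoin {s | (y, s) ∈ H} = 0 := by
    have := (pNull_iff_fairCoin_preimage_canonicalMap hP).1 (hGnull y)
    rwa [image_add_right, CharTwo.neg_eq] at this
  rw [pNull_iff_fairCoin_preimage_canonicalMap hP]
  refine measure_mono_null ?_ (hY fairCoin isFairCoin_fairCoin H hH hsection)
  rintro s ⟨x, hx, y, hy, hxy⟩
  refine mem_biUnion hy (show canonicalMap P s + y ∈ G from ?_)
  rw [show canonicalMap P s = x + y from hxy.symm, add_assoc, CharTwo.add_self_eq_zero, add_zero]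
  exact hXG hx
end
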